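/- Let G be a finite group acting by ring automorphisms on a commutative ring A with |G| invertible in A, and let J₁, J₂ ⊆ A be G-invariant ideals. Then (J₁ + J₂) ∩ A^G = (J₁ ∩ A^G) + (J₂ ∩ A^G). -/

import Mathlib

/-!
Averaging over `G` gives the Reynolds operator `R a = |G|⁻¹ ∑ g • a`: an additive projection of
`A` onto `A^G` that maps every `G`-invariant ideal into itself. An invariant `x = a + b` with
`a ∈ J₁`, `b ∈ J₂` then splits as `x = R x = R a + R b` with `R a ∈ J₁ ∩ A^G`, `R b ∈ J₂ ∩ A^G`.
-/

def fixedSubring (G A : Type*) [Monoid G] [CommRing A] [MulSemiringAction G A] : Subring A where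
  carrier := {a | ∀ g : G, g • a = a}
  mul_mem' := by intro a b ha hb g; rw [smul_mul', ha g, hb g]
  one_mem' := fun g => smul_one g
  add_mem' := by intro a b ha hb g; rw [smul_add, ha g, hb g]
  zero_mem' := fun g => smul_zero g
  neg_mem' := by intro a ha g; rw [smul_neg, ha g]

lemma smul_invOf_natCast {M A : Type*} [Monoid M] [Semiring A] [MulSemiringAction M A]
    (g : M) (n : ℕ) [Invertible (n : A)] : g • ⅟(n : A) = ⅟(n : A) := by
  have hn : g • (n : A) = n := map_natCast (MulSemiringAction.toRingHom M A g) n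
  refine (invOf_eq_right_inv ?_).symm
  calc (n : A) * g • ⅟(n : A) = g • (n : A) * g • ⅟(n : A) := by rw [hn]
    _ = g • ((n : A) * ⅟(n : A)) := (smul_mul' g _ _).symm
    _ = 1 := by rw [mul_invOf_self, smul_one]

section Reynolds

variable (G : Type*) {A : Type*} [Group G] [Fintype G] [CommRing A] [MulSemiringAction G A]
  [Invertible (Fintype.card G : A)]

noncomputable def reynolds (a : A) : A :=
  ⅟(Fintype.card G : A) * ∑ g : G, g • a

lemma reynolds_add (a b : A) : reynolds G (a + b) = reynolds G a + reynolds G b := by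
  simp only [reynolds, smul_add, Finset.sum_add_distrib, mul_add]

lemma reynolds_mem_fixedSubring (a : A) : reynolds G a ∈ fixedSubring G A := by
  intro h
  rw [reynolds, smul_mul', smul_invOf_natCast, Finset.smul_sum]
  congr 1
  exact Fintype.sum_equiv (Equiv.mulLeft h) _ _ fun g => (mul_smul h g a).symm

lemma reynolds_eq_self {a : A} (ha : a ∈ fixedSubring G A) : reynolds G a = a := by
  rw [reynolds, Finset.sum_congr rfl fun g _ => ha g, Finset.sum_const, Finset.card_univ,
    nsmul_eq_mul, invOf_mul_cancel_left]

lemma reynolds_mem_of_mem {J : Ideal A} (hJ : ∀ g : G, ∀ a ∈ J, g • a ∈ J) {a : A}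
    (ha : a ∈ J) : reynolds G a ∈ J :=
  J.mul_mem_left _ (J.sum_mem fun g _ => hJ g a ha)

end Reynolds

/-- Nagata's fundamental lemma (ii): for `G`-invariant ideals `J₁, J₂ ⊆ A`,
`(J₁ + J₂) ∩ A^G = (J₁ ∩ A^G) + (J₂ ∩ A^G)`. -/
theorem contraction_add (G A : Type*) [Group G] [Fintype G] [CommRing A]
    [MulSemiringAction G A] [Invertible ((Fintype.card G : A))]
    (J₁ J₂ : Ideal A) (hJ₁ : ∀ (g : G), ∀ a ∈ J₁, g • a ∈ J₁)
    (hJ₂ : ∀ (g : G), ∀ a ∈ J₂, g • a ∈ J₂) :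
    (J₁ ⊔ J₂).comap (fixedSubring G A).subtype =
      J₁.comap (fixedSubring G A).subtype ⊔ J₂.comap (fixedSubring G A).subtype := by
  refine le_antisymm (fun x hx => ?_) (sup_le (Ideal.comap_mono le_sup_left)
    (Ideal.comap_mono le_sup_right))
  obtain ⟨a, ha, b, hb, hab⟩ := Submodule.mem_sup.mp (Ideal.mem_comap.mp hx)
  have hx_split : (x : A) = reynolds G a + reynolds G b := by
    rw [← reynolds_add, hab]
    exact (reynolds_eq_self G x.2).symm
  exact Submodule.mem_sup.mpr ⟨⟨_, reynolds_mem_fixedSubring G a⟩, reynolds_mem_of_mem G hJ₁ ha,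
    ⟨_, reynolds_mem_fixedSubring G b⟩, reynolds_mem_of_mem G hJ₂ hb, Subtype.ext hx_split.symm⟩
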